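/- Let λ_ρ be the Bernoulli product measure on {1,2}^ℤ with λ_ρ(η(0)=1) = ρ, 0 < ρ < 1. For n ≥ 2 let H_n(η) = 1[η(1)=1, …, η(n)=1]. Then the expectation under λ_ρ of the sandpile-generator term equals ∫ L_S H_n dλ_ρ = −nρⁿ − 2ρ^{n−1}(1−ρ). -/

import Mathlib

open MeasureTheory

/-- The one-dimensional infinite-volume sandpile addition operator:
if η(x)=1 then a_x η = η + e_x; if η(x)=2 the nearest height-1 sites
x⁻ < x < x⁺ become 2 and the mirror site x⁺+x⁻−x becomes 1. -/
noncomputable def sandAdd (x : ℤ) (η : ℤ → ℕ) : ℤ → ℕ :=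
  if η x = 1 then Function.update η x 2
  else
    let xp := sInf {y : ℤ | x < y ∧ η y = 1}
    let xm := sSup {y : ℤ | y < x ∧ η y = 1}
    fun y => if y = xp + xm - x then 1 else if xm ≤ y ∧ y ≤ xp then 2 else η y

/-- H_n(η) = 1[η(1)=…=η(n)=1]. -/
noncomputable def Hfun (n : ℕ) (η : ℤ → ℕ) : ℝ :=
  if ∀ i ∈ Finset.Icc (1 : ℤ) (n : ℤ), η i = 1 then 1 else 0

/-- Good configurations. -/
def Good (η : ℤ → ℕ) : Prop :=
  (∀ z, η z = 1 ∨ η z = 2) ∧ (∀ z : ℤ, ∃ y, z < y ∧ η y = 1) ∧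
    (∀ z : ℤ, ∃ y, y < z ∧ η y = 1)

lemma avalanche {η : ℤ → ℕ} (hg : Good η) {x : ℤ} (h2 : η x = 2) :
    ∃ xp xm : ℤ, x < xp ∧ xm < x ∧ η xp = 1 ∧ η xm = 1 ∧
      (∀ y, x < y → η y = 1 → xp ≤ y) ∧ (∀ y, y < x → η y = 1 → y ≤ xm) ∧
      (∀ y, sandAdd x η y =
        if y = xp + xm - x then 1 else if xm ≤ y ∧ y ≤ xp then 2 else η y) := by
  obtain ⟨hval, hup, hdn⟩ := hg
  set Sp := {y : ℤ | x < y ∧ η y = 1} with hSp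
  set Sm := {y : ℤ | y < x ∧ η y = 1} with hSm
  have hSpne : Sp.Nonempty := hup x
  have hSmne : Sm.Nonempty := hdn x
  have hSpbdd : BddBelow Sp := ⟨x, fun y hy => le_of_lt hy.1⟩
  have hSmbdd : BddAbove Sm := ⟨x, fun y hy => le_of_lt hy.1⟩
  have hpmem : sInf Sp ∈ Sp := Int.csInf_mem hSpne hSpbdd
  have hmmem : sSup Sm ∈ Sm := Int.csSup_mem hSmne hSmbdd
  refine ⟨sInf Sp, sSup Sm, hpmem.1, hmmem.1, hpmem.2, hmmem.2,
    fun y hy hy1 => csInf_le hSpbdd ⟨hy, hy1⟩,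
    fun y hy hy1 => le_csSup hSmbdd ⟨hy, hy1⟩, fun y => ?_⟩
  have hne : ¬ η x = 1 := by omega
  simp only [sandAdd, if_neg hne]
  rfl

lemma Hfun_eq_zero {n : ℕ} {η : ℤ → ℕ} {i : ℤ} (hi : 1 ≤ i ∧ i ≤ (n:ℤ))
    (hv : η i ≠ 1) : Hfun n η = 0 := by
  rw [Hfun, if_neg]
  intro h
  exact hv (h i (Finset.mem_Icc.2 hi))

lemma Hfun_eq_one {n : ℕ} {η : ℤ → ℕ} (h : ∀ i, 1 ≤ i → i ≤ (n:ℤ) → η i = 1) :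
    Hfun n η = 1 := by
  rw [Hfun, if_pos]
  intro i hi
  rw [Finset.mem_Icc] at hi
  exact h i hi.1 hi.2

/-- If the avalanche at `x` happens while some site in `[1,n]` has height 2,
then afterwards `[1,n]` is still not all ones. -/
lemma lemZ {n : ℕ} (hn : 2 ≤ n) {η : ℤ → ℕ} (hg : Good η) {x : ℤ} (h2 : η x = 2)
    {i0 : ℤ} (hi0 : 1 ≤ i0 ∧ i0 ≤ (n:ℤ)) (hi02 : η i0 = 2) :
    Hfun n (sandAdd x η) = 0 := by
  obtain ⟨xp, xm, hxp, hxm, hηp, hηm, hple, hmge, hval⟩ := avalanche hg h2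
  set m := xp + xm - x with hm
  by_cases hmIcc : 1 ≤ m ∧ m ≤ (n:ℤ)
  · -- witness: a neighbour of m inside [1,n] ∩ [xm,xp]
    have hmxp : m < xp := by omega
    have hmxm : xm < m := by omega
    by_cases h2m : 2 ≤ m
    · refine Hfun_eq_zero (i := m - 1) (by omega) ?_
      rw [hval (m-1), if_neg (by omega), if_pos (by omega)]
      omega
    · refine Hfun_eq_zero (i := m + 1) (by omega) ?_
      rw [hval (m+1), if_neg (by omega), if_pos (by omega)]
      omega
  · refine Hfun_eq_zero (i := i0) hi0 ?_
    rw [hval i0]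
    rw [if_neg (by omega)]
    split
    · omega
    · omega

/-- Adding inside `[1,n]` always destroys the all-ones event. -/
lemma lemA {n : ℕ} (hn : 2 ≤ n) {η : ℤ → ℕ} (hg : Good η) {x : ℤ}
    (hx : 1 ≤ x ∧ x ≤ (n:ℤ)) : Hfun n (sandAdd x η) = 0 := by
  rcases hg.1 x with h1 | h2
  · refine Hfun_eq_zero (i := x) hx ?_
    rw [sandAdd, if_pos h1, Function.update_self]
    omega
  · exact lemZ hn hg h2 hx h2

/-- For `x > n`. -/
lemma lemB {n : ℕ} (hn : 2 ≤ n) {η : ℤ → ℕ} (hg : Good η) {x : ℤ}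
    (hx : (n:ℤ) < x) :
    Hfun n (sandAdd x η) - Hfun n η =
      if (∀ i, 1 ≤ i → i ≤ (n:ℤ) → η i = 1) ∧
          (∀ j, (n:ℤ) < j → j ≤ x → η j = 2) then -1 else 0 := by
  rcases hg.1 x with h1 | h2
  · -- no avalanche, site x untouched in [1,n]
    rw [if_neg (by rintro ⟨-, hall⟩; have := hall x hx le_rfl; omega)]
    have : Hfun n (sandAdd x η) = Hfun n η := by
      rw [sandAdd, if_pos h1, Hfun, Hfun]
      congr 1
      refine propext ⟨fun h i hi => ?_, fun h i hi => ?_⟩ <;>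
        [skip; skip] <;>
      · have := h i hi
        rw [Finset.mem_Icc] at hi
        rwa [Function.update_of_ne (by omega)] at *
        
    rw [this]; ring
  · obtain ⟨xp, xm, hxp, hxm, hηp, hηm, hple, hmge, hval⟩ := avalanche hg h2
    by_cases hone : ∀ i, 1 ≤ i → i ≤ (n:ℤ) → η i = 1
    · by_cases hrun : ∀ j, (n:ℤ) < j → j ≤ x → η j = 2
      · -- xm = n, site n becomes 2
        rw [if_pos ⟨hone, hrun⟩]
        have hxmn : xm = (n:ℤ) := by
          have h1 : (n:ℤ) ≤ xm := hmge n hx (hone n (by omega) le_rfl)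
          have h2' : ¬ ((n:ℤ) < xm) := fun hlt => by
            have := hrun xm hlt (le_of_lt hxm); omega
          omega
        have hnew : Hfun n (sandAdd x η) = 0 := by
          refine Hfun_eq_zero (i := (n:ℤ)) (by omega) ?_
          rw [hval (n:ℤ), if_neg (by omega), if_pos (by omega)]
          omega
        rw [hnew, Hfun_eq_one hone]; ring
      · -- a 1 strictly between n and x: avalanche confined to the right of n
        rw [if_neg (by tauto)]
        push_neg at hrun
        obtain ⟨j, hj1, hj2, hj3⟩ := hrun
        have hjx : j ≠ x := fun h => by rw [h] at hj3; omega
        have hj1' : η j = 1 := by rcases hg.1 j with h | h; exact h; omega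
        have hxmj : (n:ℤ) < xm := lt_of_lt_of_le hj1 (hmge j (by omega) hj1')
        have hnew : Hfun n (sandAdd x η) = 1 := by
          refine Hfun_eq_one fun i hi1 hi2 => ?_
          rw [hval i, if_neg (by omega), if_neg (by omega)]
          exact hone i hi1 hi2
        rw [hnew, Hfun_eq_one hone]; ring
    · -- some 2 in [1,n]: both sides zero
      rw [if_neg (by tauto)]
      push_neg at hone
      obtain ⟨i0, h1, h2', h3⟩ := hone
      have hi02 : η i0 = 2 := by rcases hg.1 i0 with h | h; omega; exact h
      rw [lemZ hn hg h2 ⟨h1, h2'⟩ hi02, Hfun_eq_zero ⟨h1, h2'⟩ (by omega)]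
      ring

/-- For `x ≤ 0`. -/
lemma lemC {n : ℕ} (hn : 2 ≤ n) {η : ℤ → ℕ} (hg : Good η) {x : ℤ}
    (hx : x ≤ 0) :
    Hfun n (sandAdd x η) - Hfun n η =
      if (∀ i, 1 ≤ i → i ≤ (n:ℤ) → η i = 1) ∧
          (∀ j, x ≤ j → j ≤ 0 → η j = 2) then -1 else 0 := by
  rcases hg.1 x with h1 | h2
  · rw [if_neg (by rintro ⟨-, hall⟩; have := hall x le_rfl hx; omega)]
    have : Hfun n (sandAdd x η) = Hfun n η := by
      rw [sandAdd, if_pos h1, Hfun, Hfun]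
      congr 1
      refine propext ⟨fun h i hi => ?_, fun h i hi => ?_⟩ <;>
      · have := h i hi
        rw [Finset.mem_Icc] at hi
        rwa [Function.update_of_ne (by omega)] at *
    rw [this]; ring
  · obtain ⟨xp, xm, hxp, hxm, hηp, hηm, hple, hmge, hval⟩ := avalanche hg h2
    by_cases hone : ∀ i, 1 ≤ i → i ≤ (n:ℤ) → η i = 1
    · by_cases hrun : ∀ j, x ≤ j → j ≤ 0 → η j = 2
      · rw [if_pos ⟨hone, hrun⟩]
        have hxp1 : xp = 1 := by
          have h1' : xp ≤ 1 := hple 1 (by omega) (hone 1 le_rfl (by omega))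
          have h2' : ¬ (xp ≤ 0) := fun hle => by
            have := hrun xp (by omega) hle; omega
          omega
        have hnew : Hfun n (sandAdd x η) = 0 := by
          refine Hfun_eq_zero (i := 1) (by omega) ?_
          rw [hval 1, if_neg (by omega), if_pos (by omega)]
          omega
        rw [hnew, Hfun_eq_one hone]; ring
      · rw [if_neg (by tauto)]
        push_neg at hrun
        obtain ⟨j, hj1, hj2, hj3⟩ := hrun
        have hjx : j ≠ x := fun h => by rw [h] at hj3; omega
        have hj1' : η j = 1 := by rcases hg.1 j with h | h; exact h; omega
        have hxpj : xp ≤ 0 := le_trans (hple j (by omega) hj1') hj2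
        have hnew : Hfun n (sandAdd x η) = 1 := by
          refine Hfun_eq_one fun i hi1 hi2 => ?_
          rw [hval i, if_neg (by omega), if_neg (by omega)]
          exact hone i hi1 hi2
        rw [hnew, Hfun_eq_one hone]; ring
    · rw [if_neg (by tauto)]
      push_neg at hone
      obtain ⟨i0, h1, h2', h3⟩ := hone
      have hi02 : η i0 = 2 := by rcases hg.1 i0 with h | h; omega; exact h
      rw [lemZ hn hg h2 ⟨h1, h2'⟩ hi02, Hfun_eq_zero ⟨h1, h2'⟩ (by omega)]
      ring

noncomputable def Ffin (n : ℕ) (x : ℤ) : Finset ℤ :=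
  if 1 ≤ x ∧ x ≤ (n:ℤ) then Finset.Icc 1 (n:ℤ)
  else if (n:ℤ) < x then Finset.Icc 1 x else Finset.Icc x (n:ℤ)

def vfun (n : ℕ) (x : ℤ) : ℤ → ℕ :=
  if 1 ≤ x ∧ x ≤ (n:ℤ) then fun _ => 1
  else if (n:ℤ) < x then fun j => if j ≤ (n:ℤ) then 1 else 2
  else fun j => if 1 ≤ j then 1 else 2

def Cset (n : ℕ) (x : ℤ) : Set (ℤ → ℕ) := {η | ∀ j ∈ Ffin n x, η j = vfun n x j}

lemma vfun_mem (n : ℕ) (x : ℤ) : ∀ z, vfun n x z = 1 ∨ vfun n x z = 2 := by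
  intro z
  unfold vfun
  split
  · left; rfl
  · split <;> simp only [] <;> split <;> simp

lemma Cset_measurable (n : ℕ) (x : ℤ) : MeasurableSet (Cset n x) := by
  have : Cset n x = ⋂ j ∈ Ffin n x, {η : ℤ → ℕ | η j = vfun n x j} := by
    ext η; simp [Cset]
  rw [this]
  exact MeasurableSet.biInter (Finset.countable_toSet _)
    (fun j _ => (measurable_pi_apply j) (MeasurableSet.singleton _))

lemma pointwise_eq {n : ℕ} (hn : 2 ≤ n) {η : ℤ → ℕ} (hg : Good η) (x : ℤ) :
    Hfun n (sandAdd x η) - Hfun n η = (Cset n x).indicator (fun _ => (-1:ℝ)) η := by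
  by_cases ha : 1 ≤ x ∧ x ≤ (n:ℤ)
  · have hmem : η ∈ Cset n x ↔ ∀ i ∈ Finset.Icc (1:ℤ) (n:ℤ), η i = 1 := by
      simp [Cset, Ffin, vfun, ha]
    rw [lemA hn hg ha]
    by_cases hc : ∀ i ∈ Finset.Icc (1:ℤ) (n:ℤ), η i = 1
    · rw [Set.indicator_of_mem (hmem.2 hc), Hfun, if_pos hc]; ring
    · rw [Set.indicator_of_notMem (fun h => hc (hmem.1 h)), Hfun, if_neg hc]; ring
  · by_cases hb : (n:ℤ) < x
    · have hmem : η ∈ Cset n x ↔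
          ((∀ i, 1 ≤ i → i ≤ (n:ℤ) → η i = 1) ∧
            (∀ j, (n:ℤ) < j → j ≤ x → η j = 2)) := by
        simp only [Cset, Ffin, vfun, if_neg ha, if_pos hb, Set.mem_setOf_eq,
          Finset.mem_Icc]
        constructor
        · intro h
          constructor
          · intro i h1 h2
            have := h i ⟨h1, by omega⟩
            rwa [if_pos h2] at this
          · intro j h1 h2
            have := h j ⟨by omega, h2⟩
            rwa [if_neg (by omega)] at this
        · rintro ⟨h1, h2⟩ j ⟨hj1, hj2⟩
          by_cases hjn : j ≤ (n:ℤ)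
          · rw [if_pos hjn]; exact h1 j hj1 hjn
          · rw [if_neg hjn]; exact h2 j (by omega) hj2
      rw [lemB hn hg hb]
      by_cases hc : (∀ i, 1 ≤ i → i ≤ (n:ℤ) → η i = 1) ∧
          (∀ j, (n:ℤ) < j → j ≤ x → η j = 2)
      · rw [if_pos hc, Set.indicator_of_mem (hmem.2 hc)]
      · rw [if_neg hc, Set.indicator_of_notMem (fun h => hc (hmem.1 h))]
    · have hx0 : x ≤ 0 := by omega
      have hmem : η ∈ Cset n x ↔
          ((∀ i, 1 ≤ i → i ≤ (n:ℤ) → η i = 1) ∧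
            (∀ j, x ≤ j → j ≤ 0 → η j = 2)) := by
        simp only [Cset, Ffin, vfun, if_neg ha, if_neg hb, Set.mem_setOf_eq,
          Finset.mem_Icc]
        constructor
        · intro h
          constructor
          · intro i h1 h2
            have := h i ⟨by omega, h2⟩
            rwa [if_pos h1] at this
          · intro j h1 h2
            have := h j ⟨h1, by omega⟩
            rwa [if_neg (by omega)] at this
        · rintro ⟨h1, h2⟩ j ⟨hj1, hj2⟩
          by_cases hj : 1 ≤ j
          · rw [if_pos hj]; exact h1 j hj hj2
          · rw [if_neg hj]; exact h2 j hj1 (by omega)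
      rw [lemC hn hg hx0]
      by_cases hc : (∀ i, 1 ≤ i → i ≤ (n:ℤ) → η i = 1) ∧
          (∀ j, x ≤ j → j ≤ 0 → η j = 2)
      · rw [if_pos hc, Set.indicator_of_mem (hmem.2 hc)]
      · rw [if_neg hc, Set.indicator_of_notMem (fun h => hc (hmem.1 h))]

def pfun (ρ : ℝ) (n : ℕ) (x : ℤ) : ℝ :=
  if 1 ≤ x ∧ x ≤ (n:ℤ) then ρ^n
  else if (n:ℤ) < x then ρ^n * (1-ρ)^((x-(n:ℤ)).toNat)
  else ρ^n * (1-ρ)^((1-x).toNat)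

lemma pfun_nonneg {ρ : ℝ} (hρ0 : 0 < ρ) (hρ1 : ρ < 1) (n : ℕ) (x : ℤ) :
    0 ≤ pfun ρ n x := by
  unfold pfun
  have h1 : (0:ℝ) ≤ ρ^n := pow_nonneg hρ0.le n
  have h2 : (0:ℝ) ≤ 1 - ρ := by linarith
  split
  · exact h1
  · split <;> positivity

lemma measure_Cset {ρ : ℝ} (hρ0 : 0 < ρ) (hρ1 : ρ < 1) {n : ℕ}
    {μ : Measure (ℤ → ℕ)}
    (hcyl : ∀ (F : Finset ℤ) (v : ℤ → ℕ), (∀ x, v x = 1 ∨ v x = 2) →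
      μ {η | ∀ x ∈ F, η x = v x} =
        ∏ x ∈ F, ENNReal.ofReal (if v x = 1 then ρ else 1 - ρ)) (x : ℤ) :
    μ (Cset n x) = ENNReal.ofReal (pfun ρ n x) := by
  have h1ρ : (0:ℝ) ≤ 1 - ρ := by linarith
  have h := hcyl (Ffin n x) (vfun n x) (vfun_mem n x)
  rw [show Cset n x = {η | ∀ j ∈ Ffin n x, η j = vfun n x j} from rfl]
  rw [h]
  by_cases ha : 1 ≤ x ∧ x ≤ (n:ℤ)
  · simp only [Ffin, vfun, pfun, if_pos ha]
    norm_num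
    exact (ENNReal.ofReal_pow hρ0.le n).symm
  · by_cases hb : (n:ℤ) < x
    · simp only [Ffin, vfun, pfun, if_neg ha, if_pos hb]
      have hcong : ∀ j ∈ Finset.Icc (1:ℤ) x,
          ENNReal.ofReal (if (if j ≤ (n:ℤ) then (1:ℕ) else 2) = 1 then ρ else 1-ρ)
            = if j ≤ (n:ℤ) then ENNReal.ofReal ρ else ENNReal.ofReal (1-ρ) := by
        intro j _
        by_cases hj : j ≤ (n:ℤ) <;> simp [hj]
      rw [Finset.prod_congr rfl hcong, Finset.prod_ite, Finset.prod_const,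
        Finset.prod_const]
      have hf1 : Finset.filter (fun j => j ≤ (n:ℤ)) (Finset.Icc 1 x)
          = Finset.Icc (1:ℤ) (n:ℤ) := by
        ext j; simp only [Finset.mem_filter, Finset.mem_Icc]; omega
      have hf2 : Finset.filter (fun j => ¬ j ≤ (n:ℤ)) (Finset.Icc 1 x)
          = Finset.Icc ((n:ℤ)+1) x := by
        ext j; simp only [Finset.mem_filter, Finset.mem_Icc]; omega
      rw [hf1, hf2, Int.card_Icc, Int.card_Icc,
        ENNReal.ofReal_mul (pow_nonneg hρ0.le n), ENNReal.ofReal_pow hρ0.le,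
        ENNReal.ofReal_pow h1ρ]
      congr 2 <;> omega
    · simp only [Ffin, vfun, pfun, if_neg ha, if_neg hb]
      have hcong : ∀ j ∈ Finset.Icc x (n:ℤ),
          ENNReal.ofReal (if (if 1 ≤ j then (1:ℕ) else 2) = 1 then ρ else 1-ρ)
            = if 1 ≤ j then ENNReal.ofReal ρ else ENNReal.ofReal (1-ρ) := by
        intro j _
        by_cases hj : 1 ≤ j <;> simp [hj]
      rw [Finset.prod_congr rfl hcong, Finset.prod_ite, Finset.prod_const,
        Finset.prod_const]
      have hf1 : Finset.filter (fun j => 1 ≤ j) (Finset.Icc x (n:ℤ))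
          = Finset.Icc (1:ℤ) (n:ℤ) := by
        ext j; simp only [Finset.mem_filter, Finset.mem_Icc]; omega
      have hf2 : Finset.filter (fun j => ¬ 1 ≤ j) (Finset.Icc x (n:ℤ))
          = Finset.Icc x 0 := by
        ext j; simp only [Finset.mem_filter, Finset.mem_Icc]; omega
      rw [hf1, hf2, Int.card_Icc, Int.card_Icc,
        ENNReal.ofReal_mul (pow_nonneg hρ0.le n), ENNReal.ofReal_pow hρ0.le,
        ENNReal.ofReal_pow h1ρ]
      congr 2 <;> omega

lemma ae_good {ρ : ℝ} (hρ0 : 0 < ρ) (hρ1 : ρ < 1)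
    {μ : Measure (ℤ → ℕ)} [IsProbabilityMeasure μ]
    (hcyl : ∀ (F : Finset ℤ) (v : ℤ → ℕ), (∀ x, v x = 1 ∨ v x = 2) →
      μ {η | ∀ x ∈ F, η x = v x} =
        ∏ x ∈ F, ENNReal.ofReal (if v x = 1 then ρ else 1 - ρ)) :
    ∀ᵐ η ∂μ, Good η := by
  have h1ρ : (0:ℝ) ≤ 1 - ρ := by linarith
  -- single-site values
  have hval : ∀ z : ℤ, μ {η : ℤ → ℕ | ¬(η z = 1 ∨ η z = 2)} = 0 := by
    intro z
    have m1 : MeasurableSet {η : ℤ → ℕ | η z = 1} :=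
      (measurable_pi_apply z) (MeasurableSet.singleton 1)
    have m2 : MeasurableSet {η : ℤ → ℕ | η z = 2} :=
      (measurable_pi_apply z) (MeasurableSet.singleton 2)
    have e1 : μ {η : ℤ → ℕ | η z = 1} = ENNReal.ofReal ρ := by
      have := hcyl {z} (fun _ => 1) (fun _ => Or.inl rfl)
      simpa using this
    have e2 : μ {η : ℤ → ℕ | η z = 2} = ENNReal.ofReal (1-ρ) := by
      have := hcyl {z} (fun _ => 2) (fun _ => Or.inr rfl)
      simpa using this
    have hdisj : Disjoint {η : ℤ → ℕ | η z = 1} {η : ℤ → ℕ | η z = 2} := by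
      rw [Set.disjoint_left]
      intro η h1 h2
      simp only [Set.mem_setOf_eq] at h1 h2
      omega
    have hunion : μ ({η : ℤ → ℕ | η z = 1} ∪ {η : ℤ → ℕ | η z = 2}) = 1 := by
      rw [measure_union hdisj m2, e1, e2, ← ENNReal.ofReal_add hρ0.le h1ρ]
      norm_num
    have : {η : ℤ → ℕ | ¬(η z = 1 ∨ η z = 2)} =
        ({η : ℤ → ℕ | η z = 1} ∪ {η : ℤ → ℕ | η z = 2})ᶜ := by
      ext η; simp [Set.mem_union]
    rw [this, measure_compl (m1.union m2) (measure_ne_top μ _), hunion,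
      measure_univ, tsub_self]
  -- no ones above
  have hup : ∀ z : ℤ,
      μ {η : ℤ → ℕ | (∀ w, η w = 1 ∨ η w = 2) ∧ ¬∃ y, z < y ∧ η y = 1} = 0 := by
    intro z
    set X := {η : ℤ → ℕ | (∀ w, η w = 1 ∨ η w = 2) ∧ ¬∃ y, z < y ∧ η y = 1}
    have hbound : ∀ k : ℕ, μ X ≤ ENNReal.ofReal ((1-ρ)^k) := by
      intro k
      have hsub : X ⊆ {η : ℤ → ℕ | ∀ j ∈ Finset.Icc (z+1) (z+(k:ℤ)), η j = (fun _ => 2) j} := by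
        intro η ⟨hv, hne⟩ j hj
        rw [Finset.mem_Icc] at hj
        rcases hv j with h | h
        · exact absurd ⟨j, by omega, h⟩ hne
        · exact h
      refine le_trans (measure_mono hsub) ?_
      rw [hcyl _ (fun _ => 2) (fun _ => Or.inr rfl)]
      have : ∀ j ∈ Finset.Icc (z+1) (z+(k:ℤ)),
          ENNReal.ofReal (if (2:ℕ) = 1 then ρ else 1-ρ) = ENNReal.ofReal (1-ρ) := by
        intro j _; norm_num
      have hk : (z + (k:ℤ) + 1 - (z+1)).toNat = k := by omega
      rw [Finset.prod_congr rfl this, Finset.prod_const, Int.card_Icc, hk,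
        ← ENNReal.ofReal_pow h1ρ]
    have htend : Filter.Tendsto (fun k : ℕ => ENNReal.ofReal ((1-ρ)^k))
        Filter.atTop (nhds 0) := by
      have := ENNReal.tendsto_ofReal
        (tendsto_pow_atTop_nhds_zero_of_lt_one h1ρ (by linarith))
      simpa using this
    exact le_antisymm (ge_of_tendsto' htend hbound) zero_le
  -- no ones below
  have hdn : ∀ z : ℤ,
      μ {η : ℤ → ℕ | (∀ w, η w = 1 ∨ η w = 2) ∧ ¬∃ y, y < z ∧ η y = 1} = 0 := by
    intro z
    set X := {η : ℤ → ℕ | (∀ w, η w = 1 ∨ η w = 2) ∧ ¬∃ y, y < z ∧ η y = 1}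
    have hbound : ∀ k : ℕ, μ X ≤ ENNReal.ofReal ((1-ρ)^k) := by
      intro k
      have hsub : X ⊆ {η : ℤ → ℕ | ∀ j ∈ Finset.Icc (z-(k:ℤ)) (z-1), η j = (fun _ => 2) j} := by
        intro η ⟨hv, hne⟩ j hj
        rw [Finset.mem_Icc] at hj
        rcases hv j with h | h
        · exact absurd ⟨j, by omega, h⟩ hne
        · exact h
      refine le_trans (measure_mono hsub) ?_
      rw [hcyl _ (fun _ => 2) (fun _ => Or.inr rfl)]
      have : ∀ j ∈ Finset.Icc (z-(k:ℤ)) (z-1),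
          ENNReal.ofReal (if (2:ℕ) = 1 then ρ else 1-ρ) = ENNReal.ofReal (1-ρ) := by
        intro j _; norm_num
      have hk : (z - 1 + 1 - (z-(k:ℤ))).toNat = k := by omega
      rw [Finset.prod_congr rfl this, Finset.prod_const, Int.card_Icc, hk,
        ← ENNReal.ofReal_pow h1ρ]
    have htend : Filter.Tendsto (fun k : ℕ => ENNReal.ofReal ((1-ρ)^k))
        Filter.atTop (nhds 0) := by
      have := ENNReal.tendsto_ofReal
        (tendsto_pow_atTop_nhds_zero_of_lt_one h1ρ (by linarith))
      simpa using this
    exact le_antisymm (ge_of_tendsto' htend hbound) zero_le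
  -- assemble
  rw [Filter.eventually_iff, mem_ae_iff]
  apply measure_mono_null (t := (⋃ z : ℤ, {η : ℤ → ℕ | ¬(η z = 1 ∨ η z = 2)}) ∪
    ((⋃ z : ℤ, {η : ℤ → ℕ | (∀ w, η w = 1 ∨ η w = 2) ∧ ¬∃ y, z < y ∧ η y = 1}) ∪
     (⋃ z : ℤ, {η : ℤ → ℕ | (∀ w, η w = 1 ∨ η w = 2) ∧ ¬∃ y, y < z ∧ η y = 1})))
  · intro η hη
    simp only [Set.mem_compl_iff, Set.mem_setOf_eq] at hη
    by_cases hv : ∀ w, η w = 1 ∨ η w = 2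
    · by_cases hB : ∀ z : ℤ, ∃ y, z < y ∧ η y = 1
      · by_cases hC : ∀ z : ℤ, ∃ y, y < z ∧ η y = 1
        · exact absurd ⟨hv, hB, hC⟩ hη
        · push_neg at hC
          obtain ⟨z, hz⟩ := hC
          right; right
          exact Set.mem_iUnion.2 ⟨z, ⟨hv, by push_neg; exact hz⟩⟩
      · push_neg at hB
        obtain ⟨z, hz⟩ := hB
        right; left
        exact Set.mem_iUnion.2 ⟨z, ⟨hv, by push_neg; exact hz⟩⟩
    · left
      push_neg at hv
      obtain ⟨w, hw⟩ := hv
      exact Set.mem_iUnion.2 ⟨w, by simpa using hw⟩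
  · exact measure_union_null (measure_iUnion_null hval)
      (measure_union_null (measure_iUnion_null hup) (measure_iUnion_null hdn))

lemma hasSum_neg_pfun {ρ : ℝ} (hρ0 : 0 < ρ) (hρ1 : ρ < 1) {n : ℕ} (hn : 2 ≤ n) :
    HasSum (fun x : ℤ => -pfun ρ n x)
      (-(n:ℝ) * ρ^n - 2 * ρ^(n-1) * (1-ρ)) := by
  have h1ρ : (0:ℝ) ≤ 1 - ρ := by linarith
  set q1 : ℤ → ℝ := fun x => if 1 ≤ x ∧ x ≤ (n:ℤ) then -(ρ^n) else 0 with hq1d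
  set q2 : ℤ → ℝ := fun x => if (n:ℤ) < x then -(ρ^n * (1-ρ)^((x-(n:ℤ)).toNat)) else 0 with hq2d
  set q3 : ℤ → ℝ := fun x => if x ≤ 0 then -(ρ^n * (1-ρ)^((1-x).toNat)) else 0 with hq3d
  have hgeo : HasSum (fun i : ℕ => (-(ρ^n) * (1-ρ)) * (1-ρ)^i)
      (-(ρ^(n-1)) * (1-ρ)) := by
    have h := (hasSum_geometric_of_lt_one h1ρ (by linarith)).mul_left (-(ρ^n) * (1-ρ))
    have he : -(ρ^n) * (1-ρ) * (1 - (1-ρ))⁻¹ = -(ρ^(n-1)) * (1-ρ) := by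
      have hρn : ρ^n = ρ^(n-1) * ρ := by
        rw [← pow_succ]
        congr 1
        omega
      have : (1 - (1-ρ)) = ρ := by ring
      rw [this, hρn]
      field_simp
    rwa [he] at h
  have hs1 : HasSum q1 (-(n:ℝ) * ρ^n) := by
    have h0 : ∀ x ∉ Finset.Icc (1:ℤ) (n:ℤ), q1 x = 0 := by
      intro x hx
      rw [Finset.mem_Icc] at hx
      simp only [hq1d, if_neg hx]
    have : HasSum q1 (∑ x ∈ Finset.Icc (1:ℤ) (n:ℤ), q1 x) := hasSum_sum_of_ne_finset_zero h0
    have hsum : ∑ x ∈ Finset.Icc (1:ℤ) (n:ℤ), q1 x = -(n:ℝ) * ρ^n := by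
      rw [Finset.sum_congr rfl (fun x hx => by
        rw [Finset.mem_Icc] at hx
        simp only [hq1d, if_pos hx] : ∀ x ∈ Finset.Icc (1:ℤ) (n:ℤ), q1 x = -(ρ^n))]
      rw [Finset.sum_const, Int.card_Icc]
      have : ((n:ℤ) + 1 - 1).toNat = n := by omega
      rw [this, nsmul_eq_mul]
      ring
    rwa [hsum] at this
  have hs2 : HasSum q2 (-(ρ^(n-1)) * (1-ρ)) := by
    set e : ℕ → ℤ := fun i => (n:ℤ) + 1 + i with hed
    have he : Function.Injective e := fun a b h => by
      simp only [hed] at h; omega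
    have h0 : ∀ x ∉ Set.range e, q2 x = 0 := by
      intro x hx
      simp only [hq2d]
      rw [if_neg]
      intro hlt
      exact hx ⟨(x - (n:ℤ) - 1).toNat, by simp only [hed]; omega⟩
    rw [← Function.Injective.hasSum_iff he h0]
    have : (fun i : ℕ => q2 (e i)) = fun i : ℕ => (-(ρ^n) * (1-ρ)) * (1-ρ)^i := by
      funext i
      have h1 : ((n:ℤ) < e i) := by simp only [hed]; omega
      have h2 : (e i - (n:ℤ)).toNat = i + 1 := by simp only [hed]; omega
      simp only [hq2d, if_pos h1, h2, pow_succ]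
      ring
    rw [show (q2 ∘ e) = fun i : ℕ => q2 (e i) from rfl, this]
    exact hgeo
  have hs3 : HasSum q3 (-(ρ^(n-1)) * (1-ρ)) := by
    set e : ℕ → ℤ := fun i => -(i:ℤ) with hed
    have he : Function.Injective e := fun a b h => by
      simp only [hed] at h; omega
    have h0 : ∀ x ∉ Set.range e, q3 x = 0 := by
      intro x hx
      simp only [hq3d]
      rw [if_neg]
      intro hle
      exact hx ⟨(-x).toNat, by simp only [hed]; omega⟩
    rw [← Function.Injective.hasSum_iff he h0]
    have : (fun i : ℕ => q3 (e i)) = fun i : ℕ => (-(ρ^n) * (1-ρ)) * (1-ρ)^i := by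
      funext i
      have h1 : (e i ≤ 0) := by simp only [hed]; omega
      have h2 : (1 - e i).toNat = i + 1 := by simp only [hed]; omega
      simp only [hq3d, if_pos h1, h2, pow_succ]
      ring
    rw [show (q3 ∘ e) = fun i : ℕ => q3 (e i) from rfl, this]
    exact hgeo
  have hsum := (hs1.add hs2).add hs3
  have hfun : (fun x => q1 x + q2 x + q3 x) = fun x : ℤ => -pfun ρ n x := by
    funext x
    simp only [hq1d, hq2d, hq3d, pfun]
    by_cases ha : 1 ≤ x ∧ x ≤ (n:ℤ)
    · rw [if_pos ha, if_pos ha, if_neg (by omega), if_neg (by omega)]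
      ring
    · rw [if_neg ha, if_neg ha]
      by_cases hb : (n:ℤ) < x
      · rw [if_pos hb, if_pos hb, if_neg (by omega)]
        ring
      · rw [if_neg hb, if_neg hb, if_pos (by omega)]
        ring
  rw [hfun] at hsum
  convert hsum using 1
  ring

/-- Under the Bernoulli product measure λ_ρ on {1,2}^ℤ with
density ρ of 1's, for n ≥ 2, ∫ L_S H_n dλ_ρ = −nρⁿ − 2ρ^{n−1}(1−ρ),
where L_S f(η) = Σ_x (f(a_x η) − f(η)) is the sandpile generator. -/
theorem sandpile_generator_on_Hn
    (ρ : ℝ) (hρ0 : 0 < ρ) (hρ1 : ρ < 1) (n : ℕ) (hn : 2 ≤ n)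
    (μ : Measure (ℤ → ℕ)) [IsProbabilityMeasure μ]
    -- λ_ρ : Bernoulli product cylinder probabilities
    (hcyl : ∀ (F : Finset ℤ) (v : ℤ → ℕ), (∀ x, v x = 1 ∨ v x = 2) →
      μ {η | ∀ x ∈ F, η x = v x} =
        ∏ x ∈ F, ENNReal.ofReal (if v x = 1 then ρ else 1 - ρ)) :
    ∫ η, (∑' x : ℤ, (Hfun n (sandAdd x η) - Hfun n η)) ∂μ =
      -(n : ℝ) * ρ ^ n - 2 * ρ ^ (n - 1) * (1 - ρ) := by
  have hae := ae_good hρ0 hρ1 hcyl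
  have hcongr : (fun η => ∑' x : ℤ, (Hfun n (sandAdd x η) - Hfun n η)) =ᵐ[μ]
      (fun η => ∑' x : ℤ, (Cset n x).indicator (fun _ => (-1:ℝ)) η) :=
    hae.mono fun η hg => tsum_congr fun x => pointwise_eq hn hg x
  rw [integral_congr_ae hcongr]
  have hmeas : ∀ x : ℤ,
      AEStronglyMeasurable ((Cset n x).indicator fun _ => (-1:ℝ)) μ := fun x =>
    (measurable_const.indicator (Cset_measurable n x)).aestronglyMeasurable
  have hlintval : ∀ x : ℤ,
      ∫⁻ η, ‖(Cset n x).indicator (fun _ => (-1:ℝ)) η‖₊ ∂μ = μ (Cset n x) := by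
    intro x
    have heq : (fun η => (‖(Cset n x).indicator (fun _ => (-1:ℝ)) η‖₊ : ENNReal))
        = (Cset n x).indicator (fun _ => 1) := by
      funext η
      by_cases h : η ∈ Cset n x <;> simp [h]
    rw [heq, lintegral_indicator_const (Cset_measurable n x), one_mul]
  have hsummable : Summable (pfun ρ n) := by
    have := (hasSum_neg_pfun hρ0 hρ1 hn).summable.neg
    simpa using this
  have hlint : (∑' x : ℤ, ∫⁻ η, ‖(Cset n x).indicator (fun _ => (-1:ℝ)) η‖₊ ∂μ)
      ≠ ⊤ := by
    have : (∑' x : ℤ, ∫⁻ η, ‖(Cset n x).indicator (fun _ => (-1:ℝ)) η‖₊ ∂μ)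
        = ∑' x : ℤ, ENNReal.ofReal (pfun ρ n x) := by
      refine tsum_congr fun x => ?_
      rw [hlintval x, measure_Cset hρ0 hρ1 hcyl x]
    rw [this, ← ENNReal.ofReal_tsum_of_nonneg (fun x => pfun_nonneg hρ0 hρ1 n x)
      hsummable]
    exact ENNReal.ofReal_ne_top
  rw [integral_tsum hmeas hlint]
  have hint : ∀ x : ℤ,
      ∫ η, (Cset n x).indicator (fun _ => (-1:ℝ)) η ∂μ = -pfun ρ n x := by
    intro x
    rw [integral_indicator_const (-1:ℝ) (Cset_measurable n x), measureReal_def,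
      measure_Cset hρ0 hρ1 hcyl x, ENNReal.toReal_ofReal (pfun_nonneg hρ0 hρ1 n x)]
    simp
  rw [tsum_congr hint]
  exact (hasSum_neg_pfun hρ0 hρ1 hn).tsum_eq
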